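/- Let a, x ∈ S(0,∞). The following are equivalent: (1) there exists C > 0 such that μ(s; x) ≤ C·μ(s/C; a) for every s > 0; (2) there exists C > 0 such that K_u(x) ≤ C·K_u(a) for every u > 0. -/

import Mathlib

open MeasureTheory Filter Set
open scoped ENNReal NNReal

/-- Lebesgue measure on `(0, ∞)`. -/
noncomputable def mLeb : Measure ℝ := volume.restrict (Set.Ioi (0:ℝ))

/-- The distribution function `d_f(s) = m {t ∈ (0,∞) : |f t| > s}`. -/
noncomputable def distFun (f : ℝ → ℝ) (s : ℝ) : ℝ≥0∞ := mLeb {t | s < |f t|}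

/-- `f ∈ S(0,∞)`: `f` is measurable and `d_f(s) < ∞` for some `s > 0`. -/
def MemS (f : ℝ → ℝ) : Prop := Measurable f ∧ ∃ s > (0:ℝ), distFun f s < ⊤

/-- `‖g‖₀ = m (supp g)`, the `L₀`-group-norm. -/
noncomputable def norm0 (g : ℝ → ℝ) : ℝ≥0∞ := mLeb (Function.support g)

/-- `‖h‖∞`, the essential supremum norm on `(0,∞)`. -/
noncomputable def normInf (h : ℝ → ℝ) : ℝ≥0∞ := eLpNorm h ⊤ mLeb

/-- `g ∈ L₀(0,∞)`: measurable with support of finite measure. -/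
def MemL0 (g : ℝ → ℝ) : Prop := Measurable g ∧ norm0 g < ⊤

/-- `h ∈ L∞(0,∞)`: measurable and essentially bounded. -/
def MemLinf (h : ℝ → ℝ) : Prop := Measurable h ∧ normInf h < ⊤

/-- The K-functional `K_u(f) = inf {‖g‖₀ + u‖h‖∞ : f = g + h, g ∈ L₀, h ∈ L∞}`. -/
noncomputable def Kfun (u : ℝ) (f : ℝ → ℝ) : ℝ≥0∞ :=
  ⨅ (g : ℝ → ℝ) (h : ℝ → ℝ) (_ : MemL0 g) (_ : MemLinf h) (_ : f = g + h),
    norm0 g + ENNReal.ofReal u * normInf h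

/-- The decreasing rearrangement `μ(t; f) = inf {s ≥ 0 : d_f(s) ≤ t}`. -/
noncomputable def rearr (f : ℝ → ℝ) (t : ℝ) : ℝ :=
  sInf {s : ℝ | 0 ≤ s ∧ distFun f s ≤ ENNReal.ofReal t}

/-- The Δ-norm `‖f‖_S = inf_{s>0} [s + d_f(s)]`. -/
noncomputable def normS (f : ℝ → ℝ) : ℝ≥0∞ :=
  ⨅ (s : ℝ) (_ : 0 < s), ENNReal.ofReal s + distFun f s

/-!
Truncating `f` at height `v` shows `K_u(f) = inf_{v > 0} (d_f(v) + u v)`, so the K-functional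
is an infimal convolution of the distribution function with a linear function. Condition (1)
implies `d_x(C v) ≤ C d_a(v)`, which passes through the infimum. Conversely, given
`v > μ(t; a)` choose `u = t / v`: then `K_u(a) ≤ 2t`, so `2Ct ≥ K_u(x) ≥ min (d_x(3Cv), 3Ct)`,
which forces `d_x(3Cv) ≤ 3Ct`.
-/

open Topology

section Distribution

variable {f : ℝ → ℝ}

lemma distFun_antitone (f : ℝ → ℝ) : Antitone (distFun f) :=
  fun _ _ hvw => measure_mono fun _ ht => lt_of_le_of_lt hvw ht

lemma distFun_le_of_forall_lt {v : ℝ} {c : ℝ≥0∞} (h : ∀ w, v < w → distFun f w ≤ c) :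
    distFun f v ≤ c := by
  have hunion : {t | v < |f t|} = ⋃ n : ℕ, {t | v + 1 / ((n : ℝ) + 1) < |f t|} := by
    ext t
    simp only [mem_ofPred_eq, mem_iUnion]
    refine ⟨fun ht => ?_, fun ⟨n, hn⟩ => (le_add_of_nonneg_right (by positivity)).trans_lt hn⟩
    obtain ⟨n, hn⟩ := exists_nat_one_div_lt (sub_pos.mpr ht)
    exact ⟨n, by linarith⟩
  have hmono : Monotone fun n : ℕ => {t | v + 1 / ((n : ℝ) + 1) < |f t|} :=
    fun m n hmn _ ht => by
      simp only [mem_ofPred_eq] at ht ⊢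
      linarith [Nat.one_div_le_one_div (α := ℝ) hmn]
  rw [distFun, hunion, hmono.measure_iUnion]
  exact iSup_le fun n => h _ (lt_add_of_pos_right v (by positivity))

lemma tendsto_distFun_atTop (hf : MemS f) : Tendsto (distFun f) atTop (𝓝 0) := by
  obtain ⟨hmeas, s, -, hs⟩ := hf
  have hinter : (⋂ w : ℝ, {t | w < |f t|}) = ∅ :=
    eq_empty_of_forall_notMem fun t ht => lt_irrefl |f t| (mem_iInter.mp ht _)
  have := tendsto_measure_iInter_atTop (μ := mLeb) (s := fun w : ℝ => {t | w < |f t|})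
    (fun w => (measurableSet_lt measurable_const hmeas.abs).nullMeasurableSet)
    (fun _ _ hvw _ ht => lt_of_le_of_lt hvw ht) ⟨s, hs.ne⟩
  rwa [hinter, measure_empty] at this

lemma rearr_nonneg (f : ℝ → ℝ) (t : ℝ) : 0 ≤ rearr f t :=
  Real.sInf_nonneg fun _ hs => hs.1

lemma rearr_le_iff (hf : MemS f) {t v : ℝ} (ht : 0 < t) (hv : 0 ≤ v) :
    rearr f t ≤ v ↔ distFun f v ≤ ENNReal.ofReal t := by
  refine ⟨fun hle => distFun_le_of_forall_lt fun w hw => ?_,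
    fun hd => csInf_le ⟨0, fun _ hs => hs.1⟩ ⟨hv, hd⟩⟩
  have hne : {s : ℝ | 0 ≤ s ∧ distFun f s ≤ ENNReal.ofReal t}.Nonempty := by
    obtain ⟨s, hs, hs₀⟩ := (((tendsto_distFun_atTop hf).eventually
      (gt_mem_nhds (ENNReal.ofReal_pos.mpr ht))).and (eventually_ge_atTop 0)).exists
    exact ⟨s, hs₀, hs.le⟩
  obtain ⟨s, hs, hsw⟩ := exists_lt_of_csInf_lt hne (lt_of_le_of_lt hle hw)
  exact (distFun_antitone f hsw.le).trans hs.2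

end Distribution

lemma le_add_ofReal_mul_of_forall_gt {X A : ℝ≥0∞} {c β : ℝ}
    (h : ∀ v, β < v → X ≤ A + ENNReal.ofReal (c * v)) : X ≤ A + ENNReal.ofReal (c * β) := by
  have hcont : Continuous fun v : ℝ => A + ENNReal.ofReal (c * v) :=
    continuous_const.add (ENNReal.continuous_ofReal.comp (continuous_const.mul continuous_id))
  exact ge_of_tendsto (hcont.continuousWithinAt (s := Ioi β)) (eventually_mem_nhdsWithin.mono h)

section KFunctional

variable {f : ℝ → ℝ}

lemma distFun_add_le_norm0 {g h : ℝ → ℝ} {v : ℝ} (hv : 0 ≤ v) (hh : normInf h ≤ ENNReal.ofReal v) :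
    distFun (g + h) v ≤ norm0 g := by
  refine measure_mono_ae ?_
  filter_upwards [ae_le_eLpNormEssSup (f := h) (μ := mLeb)] with t ht hlt hg
  have hht : |h t| ≤ v := by
    rw [normInf, eLpNorm_exponent_top] at hh
    rw [← ENNReal.ofReal_le_ofReal_iff hv, ← Real.enorm_eq_ofReal_abs]
    exact ht.trans hh
  have : v < |h t| := by simpa [hg] using (show v < |g t + h t| from hlt)
  exact this.not_ge hht

lemma Kfun_le_distFun_add (hf : Measurable f) {u v : ℝ} (hu : 0 ≤ u) (hv : 0 < v) :
    Kfun u f ≤ distFun f v + ENNReal.ofReal (u * v) := by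
  rcases eq_top_or_lt_top (distFun f v) with hD | hD
  · simp [hD]
  set E := {t | v < |f t|}
  have hE : MeasurableSet E := measurableSet_lt measurable_const hf.abs
  have hg : MemL0 (E.indicator f) :=
    ⟨hf.indicator hE, (measure_mono Set.support_indicator_subset).trans_lt hD⟩
  have hbound : normInf (Eᶜ.indicator f) ≤ ENNReal.ofReal v := by
    rw [normInf, eLpNorm_exponent_top]
    refine eLpNormEssSup_le_of_ae_bound (Eventually.of_forall fun t => ?_)
    by_cases ht : t ∈ E
    · simp [ht, hv.le]
    · rw [indicator_of_mem (mem_compl ht), Real.norm_eq_abs]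
      exact not_lt.mp ht
  have hh : MemLinf (Eᶜ.indicator f) :=
    ⟨hf.indicator hE.compl, hbound.trans_lt ENNReal.ofReal_lt_top⟩
  calc Kfun u f ≤ norm0 (E.indicator f) + ENNReal.ofReal u * normInf (Eᶜ.indicator f) :=
        iInf₂_le_of_le _ _ <| iInf₂_le_of_le hg hh <| iInf_le_of_le
          (E.indicator_self_add_compl f).symm le_rfl
    _ ≤ distFun f v + ENNReal.ofReal (u * v) := by
        rw [ENNReal.ofReal_mul hu]
        gcongr
        exact measure_mono Set.support_indicator_subset

lemma iInf_distFun_le_Kfun {u : ℝ} (hu : 0 < u) :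
    ⨅ (v : ℝ) (_ : 0 < v), distFun f v + ENNReal.ofReal (u * v) ≤ Kfun u f := by
  refine le_iInf₂ fun g h => le_iInf₂ fun _ hh => le_iInf fun hfgh => ?_
  have hN : normInf h = ENNReal.ofReal (normInf h).toReal := (ENNReal.ofReal_toReal hh.2.ne).symm
  rw [hN, ← ENNReal.ofReal_mul hu.le]
  refine le_add_ofReal_mul_of_forall_gt fun v hv => ?_
  have hv₀ : 0 < v := lt_of_le_of_lt ENNReal.toReal_nonneg hv
  refine iInf₂_le_of_le v hv₀ (add_le_add ?_ le_rfl)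
  rw [hfgh]
  exact distFun_add_le_norm0 hv₀.le (hN.trans_le (ENNReal.ofReal_le_ofReal hv.le))

lemma min_distFun_le_Kfun {u w : ℝ} (hu : 0 < u) :
    min (distFun f w) (ENNReal.ofReal (u * w)) ≤ Kfun u f := by
  refine le_trans (le_iInf₂ fun v _ => ?_) (iInf_distFun_le_Kfun hu)
  rcases le_total v w with hvw | hwv
  · exact (min_le_left _ _).trans (le_add_right (distFun_antitone f hvw))
  · exact (min_le_right _ _).trans
      (le_add_left (ENNReal.ofReal_le_ofReal (mul_le_mul_of_nonneg_left hwv hu.le)))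

end KFunctional

section Comparison

variable {a x : ℝ → ℝ} {C : ℝ}

lemma distFun_mul_le_of_rearr_le (ha : MemS a) (hx : MemS x) (hC : 0 < C)
    (h : ∀ s > (0:ℝ), rearr x s ≤ C * rearr a (s / C)) {v : ℝ} (hv : 0 ≤ v) :
    distFun x (C * v) ≤ ENNReal.ofReal C * distFun a v := by
  rcases eq_top_or_lt_top (distFun a v) with hD | hD
  · simp [hD, hC]
  rw [← ENNReal.ofReal_toReal hD.ne, ← ENNReal.ofReal_mul hC.le, ← zero_add (ENNReal.ofReal _)]
  refine le_add_ofReal_mul_of_forall_gt fun τ hτ => ?_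
  have hτ₀ : 0 < τ := lt_of_le_of_lt ENNReal.toReal_nonneg hτ
  have hra : rearr a τ ≤ v :=
    (rearr_le_iff ha hτ₀ hv).mpr ((ENNReal.le_ofReal_iff_toReal_le hD.ne hτ₀.le).mpr hτ.le)
  have hrx : rearr x (C * τ) ≤ C * v := calc
    rearr x (C * τ) ≤ C * rearr a (C * τ / C) := h _ (by positivity)
    _ = C * rearr a τ := by rw [mul_div_cancel_left₀ _ hC.ne']
    _ ≤ C * v := by gcongr
  rw [zero_add]
  exact (rearr_le_iff hx (by positivity) (by positivity)).mp hrx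

lemma Kfun_le_of_rearr_le (ha : MemS a) (hx : MemS x) (hC : 0 < C)
    (h : ∀ s > (0:ℝ), rearr x s ≤ C * rearr a (s / C)) {u : ℝ} (hu : 0 < u) :
    Kfun u x ≤ ENNReal.ofReal C * Kfun u a := by
  have hC₀ : ENNReal.ofReal C ≠ 0 := by simpa using hC
  calc Kfun u x
      ≤ ENNReal.ofReal C * ⨅ (v : ℝ) (_ : 0 < v), distFun a v + ENNReal.ofReal (u * v) := by
        simp_rw [ENNReal.mul_iInf_of_ne hC₀ ENNReal.ofReal_ne_top]
        refine le_iInf₂ fun v hv => ?_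
        calc Kfun u x ≤ distFun x (C * v) + ENNReal.ofReal (u * (C * v)) :=
              Kfun_le_distFun_add hx.1 hu.le (by positivity)
          _ ≤ ENNReal.ofReal C * distFun a v + ENNReal.ofReal C * ENNReal.ofReal (u * v) := by
              rw [← ENNReal.ofReal_mul hC.le, mul_left_comm]
              gcongr
              exact distFun_mul_le_of_rearr_le ha hx hC h hv.le
          _ = ENNReal.ofReal C * (distFun a v + ENNReal.ofReal (u * v)) := (mul_add _ _ _).symm
    _ ≤ ENNReal.ofReal C * Kfun u a := by
        gcongr
        exact iInf_distFun_le_Kfun hu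

lemma rearr_le_of_Kfun_le (ha : MemS a) (hx : MemS x) (hC : 0 < C)
    (h : ∀ u > (0:ℝ), Kfun u x ≤ ENNReal.ofReal C * Kfun u a) {s : ℝ} (hs : 0 < s) :
    rearr x s ≤ 3 * C * rearr a (s / (3 * C)) := by
  set t := s / (3 * C)
  have ht : 0 < t := by positivity
  refine le_of_forall_gt_imp_ge_of_dense fun w hw => ?_
  set v := w / (3 * C)
  have hτv : rearr a t < v := by rw [lt_div_iff₀ (by positivity)]; linarith
  have hv : 0 < v := (rearr_nonneg a t).trans_lt hτv
  have hw₀ : 0 < w := (mul_nonneg (by positivity) (rearr_nonneg a t)).trans_lt hw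
  set u := t / v
  have hu : 0 < u := by positivity
  have hKa : Kfun u a ≤ ENNReal.ofReal (2 * t) := calc
    Kfun u a ≤ distFun a v + ENNReal.ofReal (u * v) := Kfun_le_distFun_add ha.1 hu.le hv
    _ ≤ ENNReal.ofReal t + ENNReal.ofReal t := by
        rw [div_mul_cancel₀ t hv.ne']
        gcongr
        exact (rearr_le_iff ha ht hv.le).mp hτv.le
    _ = ENNReal.ofReal (2 * t) := by rw [← ENNReal.ofReal_add ht.le ht.le, two_mul]
  have huw : u * w = s := by
    simp only [u, v, t]
    field_simp
  have hmin : min (distFun x w) (ENNReal.ofReal s) < ENNReal.ofReal s := calc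
    min (distFun x w) (ENNReal.ofReal s) ≤ Kfun u x := huw ▸ min_distFun_le_Kfun hu
    _ ≤ ENNReal.ofReal C * ENNReal.ofReal (2 * t) := (h u hu).trans (by gcongr)
    _ < ENNReal.ofReal s := by
        rw [← ENNReal.ofReal_mul hC.le, ENNReal.ofReal_lt_ofReal_iff hs]
        simp only [t]
        field_simp
        linarith
  refine (rearr_le_iff hx hs hw₀.le).mpr ?_
  rcases min_lt_iff.mp hmin with hlt | hlt
  · exact hlt.le
  · exact (lt_irrefl _ hlt).elim

end Comparison

/-- for `a, x ∈ S(0,∞)`, the following are equivalent: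
(1) `μ(s; x) ≤ C·μ(s/C; a)` for some `C > 0` and all `s > 0`;
(2) `K_u(x) ≤ C·K_u(a)` for some `C > 0` and all `u > 0`. -/
theorem stmt12 (a x : ℝ → ℝ) (ha : MemS a) (hx : MemS x) :
    (∃ C > (0:ℝ), ∀ s > (0:ℝ), rearr x s ≤ C * rearr a (s / C)) ↔
    (∃ C > (0:ℝ), ∀ u > (0:ℝ), Kfun u x ≤ ENNReal.ofReal C * Kfun u a) := by
  constructor
  · rintro ⟨C, hC, h⟩
    exact ⟨C, hC, fun u hu => Kfun_le_of_rearr_le ha hx hC h hu⟩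
  · rintro ⟨C, hC, h⟩
    exact ⟨3 * C, by positivity, fun s hs => rearr_le_of_Kfun_le ha hx hC h hs⟩
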